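/- arXiv:1604.04217 — 14 statements merged into one kernel-verified Lean document; each statement's English description precedes it below -/
import Mathlib

section
/- For every real number s ≥ 2, one has √(1 − 4/s²) ≥ (2π − 2·arccos(−2/s))/s, with equality if and only if s = 2. (In the Half-Chord strategy this says that the fast robot finishes exploring the whole boundary no later than the slow robot reaches the endpoint B of the half-chord.) -/
/-!
Put `t = arccos (2/s) ∈ [0, π/2)`. Then `√(1 - 4/s²) = sin t`, and since
`arccos (-2/s) = π - t` the right-hand side is `t · (2/s) = t cos t`. So the claim is
`t cos t ≤ sin t`, i.e. `t ≤ tan t`, which is strict for `t > 0`; and `t = 0` exactly when `s = 2`.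
-/

open Real

namespace Real

theorem mul_cos_lt_sin {t : ℝ} (h0 : 0 < t) (h : t < π / 2) : t * cos t < sin t := by
  have hcos : 0 < cos t := cos_pos_of_mem_Ioo ⟨by linarith, h⟩
  have := lt_tan h0 h
  rwa [tan_eq_sin_div_cos, lt_div_iff₀ hcos] at this

theorem arccos_mul_lt_sqrt_one_sub_sq {x : ℝ} (hx : x < 1) : arccos x * x < √(1 - x ^ 2) := by
  rcases lt_trichotomy x 0 with hneg | rfl | hpos
  · calc arccos x * x < 0 := mul_neg_of_pos_of_neg (arccos_pos.mpr hx) hneg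
      _ ≤ √(1 - x ^ 2) := sqrt_nonneg _
  · simp
  · have hx1 : -1 ≤ x := by linarith
    simpa only [cos_arccos hx1 hx.le, sin_arccos] using
      mul_cos_lt_sin (arccos_pos.mpr hx) (arccos_lt_pi_div_two.mpr hpos)

end Real

theorem sqrt_one_sub_four_div_sq (s : ℝ) : √(1 - 4 / s ^ 2) = √(1 - (2 / s) ^ 2) := by
  norm_num [div_pow]

theorem two_pi_sub_two_arccos_neg_div (s : ℝ) :
    (2 * π - 2 * arccos (-2 / s)) / s = arccos (2 / s) * (2 / s) := by
  rw [neg_div, arccos_neg]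
  ring

/-- For every real `s ≥ 2`, `√(1 − 4/s²) ≥ (2π − 2·arccos(−2/s))/s`,
with equality if and only if `s = 2`. -/
theorem halfChord_fast_finishes_first (s : ℝ) (hs : 2 ≤ s) :
    Real.sqrt (1 - 4 / s ^ 2) ≥ (2 * Real.pi - 2 * Real.arccos (-2 / s)) / s ∧
    (Real.sqrt (1 - 4 / s ^ 2) = (2 * Real.pi - 2 * Real.arccos (-2 / s)) / s ↔ s = 2) := by
  rw [sqrt_one_sub_four_div_sq, two_pi_sub_two_arccos_neg_div]
  have hs0 : 0 < s := by linarith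
  rcases (div_le_one hs0).mpr hs |>.lt_or_eq with hlt | heq
  · have key := arccos_mul_lt_sqrt_one_sub_sq hlt
    refine ⟨key.le, fun h ↦ absurd h key.ne', fun h ↦ ?_⟩
    subst h
    norm_num at hlt
  · obtain rfl := (div_eq_one_iff_eq hs0.ne').mp heq |>.symm
    simp
end

section
/- For every real number s ≥ 2 and every a ∈ [0, 1], (1 + a)/s + √(1 + (1+a)²/s² + 2·((1+a)/s)·cos(1/2 − a)) ≤ (1 + 2·arccos(−2/s))/s + √(1 − 4/s²). (This is the worst-case evacuation-time bound for the Half-Chord strategy when the exit is found during Phase I, where a is the arc length explored by the fast robot after reaching the boundary.) -/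
/-!
Since the chord from the slow robot to the exit is at most `1 + (1 + a)/s` (triangle inequality),
the Phase I time is at most `1 + 4/s`. With `x = 2/s`, the Half-Chord time is
`(1 + 2 arccos(-x)) x/2 + √(1 - x²)`; the bounds `arccos (-x) ≥ π/2 + x` (from `arcsin x ≥ x`) and
`√(1 - x²) ≥ 1 - x²` reduce it to at least `1 + (1 + π) x/2 ≥ 1 + 2x`, as `π ≥ 3`.
-/

open Real

namespace HalfChord

noncomputable def evacuationTime (s : ℝ) : ℝ :=
  (1 + 2 * arccos (-2 / s)) / s + √(1 - 4 / s ^ 2)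

theorem sqrt_one_add_sq_add_two_mul_cos_le {q : ℝ} (hq : 0 ≤ q) (θ : ℝ) :
    √(1 + q ^ 2 + 2 * q * cos θ) ≤ 1 + q :=
  (sqrt_le_left (by positivity)).mpr (by nlinarith [cos_le_one θ])

theorem self_le_arcsin {x : ℝ} (h₀ : 0 ≤ x) (h₁ : x ≤ 1) : x ≤ arcsin x := by
  have h := sin_le (arcsin_nonneg.mpr h₀)
  rwa [sin_arcsin (by linarith) h₁] at h

theorem pi_div_two_add_le_arccos_neg {x : ℝ} (h₀ : 0 ≤ x) (h₁ : x ≤ 1) :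
    π / 2 + x ≤ arccos (-x) := by
  rw [arccos_neg, arccos_eq_pi_div_two_sub_arcsin]
  linarith [self_le_arcsin h₀ h₁]

theorem one_add_two_mul_le {x : ℝ} (h₀ : 0 ≤ x) (h₁ : x ≤ 1) :
    1 + 2 * x ≤ (1 + 2 * arccos (-x)) * x / 2 + √(1 - x ^ 2) := by
  have harccos := pi_div_two_add_le_arccos_neg h₀ h₁
  have hsqrt : 1 - x ^ 2 ≤ √(1 - x ^ 2) := le_sqrt_self_iff.mpr (by nlinarith)
  nlinarith [pi_gt_three]

theorem one_add_four_div_le_evacuationTime {s : ℝ} (hs : 2 ≤ s) :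
    1 + 4 / s ≤ evacuationTime s := by
  have hs₀ : 0 < s := by linarith
  have h := one_add_two_mul_le (x := 2 / s) (by positivity) ((div_le_one hs₀).mpr hs)
  convert h using 1
  · ring
  · rw [evacuationTime, div_pow, neg_div]
    ring_nf

end HalfChord

/-- Phase I bound for the Half-Chord strategy: for `s ≥ 2` and `a ∈ [0,1]`,
`(1+a)/s + √(1 + (1+a)²/s² + 2·((1+a)/s)·cos(1/2 − a)) ≤ (1 + 2·arccos(−2/s))/s + √(1 − 4/s²)`. -/
theorem halfChord_phaseI (s a : ℝ) (hs : 2 ≤ s) (ha : a ∈ Set.Icc (0 : ℝ) 1) :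
    (1 + a) / s +
      Real.sqrt (1 + (1 + a) ^ 2 / s ^ 2 + 2 * ((1 + a) / s) * Real.cos (1 / 2 - a)) ≤
    (1 + 2 * Real.arccos (-2 / s)) / s + Real.sqrt (1 - 4 / s ^ 2) := by
  obtain ⟨ha₀, ha₁⟩ := ha
  have hs₀ : 0 < s := by linarith
  calc (1 + a) / s + √(1 + (1 + a) ^ 2 / s ^ 2 + 2 * ((1 + a) / s) * cos (1 / 2 - a))
      ≤ (1 + a) / s + (1 + (1 + a) / s) := by
        rw [← div_pow]
        gcongr
        exact HalfChord.sqrt_one_add_sq_add_two_mul_cos_le (by positivity) _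
    _ ≤ 1 + 4 / s := by
        have : (1 + a) / s + (1 + a) / s ≤ 4 / s := by rw [← add_div]; gcongr; linarith
        linarith
    _ ≤ HalfChord.evacuationTime s := HalfChord.one_add_four_div_le_evacuationTime hs
end

section
/- For every real number s ≥ 2, one has 2/s + √(1 + 4/s² + 4/s) ≤ (1 + 2·arccos(−2/s))/s + √(1 − 4/s²); equivalently, 1 + 4/s ≤ (1 + 2·arccos(−2/s))/s + √(1 − 4/s²). -/
/-!
Put `x = 2/s ∈ (0, 1]`. Since `sin x ≤ x`, we have `arcsin x ≥ x`, hence `arccos (-x) ≥ π/2 + x`;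
and `√(1 - x²) ≥ 1 - x²`. Substituting, the right-hand side is at least
`(1 + π + 2x) x / 2 + 1 - x² = 1 + (1 + π) x / 2 ≥ 1 + 2x = 1 + 4/s`, using `π ≥ 3`.
The left-hand side of the first inequality is also `1 + 4/s`, because `1 + 4/s² + 4/s = (1 + 2/s)²`.
-/

open Real

theorem le_arcsin_self {x : ℝ} (h₀ : 0 ≤ x) (h₁ : x ≤ π / 2) : x ≤ arcsin x :=
  (le_arcsin_iff_sin_le' ⟨by linarith [pi_pos], h₁⟩).2 (sin_le h₀)

theorem pi_div_two_add_le_arccos_neg {x : ℝ} (h₀ : 0 ≤ x) (h₁ : x ≤ π / 2) :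
    π / 2 + x ≤ arccos (-x) := by
  rw [arccos_neg, arccos_eq_pi_div_two_sub_arcsin]
  linarith [le_arcsin_self h₀ h₁]

theorem one_add_two_mul_le_halfChord {x : ℝ} (h₀ : 0 ≤ x) (h₁ : x ≤ π / 2) :
    1 + 2 * x ≤ (1 + 2 * arccos (-x)) * x / 2 + √(1 - x ^ 2) := by
  have harccos : (1 + 2 * (π / 2 + x)) * x / 2 ≤ (1 + 2 * arccos (-x)) * x / 2 := by
    gcongr
    exact pi_div_two_add_le_arccos_neg h₀ h₁
  have hsqrt : 1 - x ^ 2 ≤ √(1 - x ^ 2) := le_sqrt_self_iff.2 (sub_le_self _ (sq_nonneg x))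
  nlinarith [pi_gt_three]

/-- Crude Phase I bound for the Half-Chord strategy: for `s ≥ 2`,
`2/s + √(1 + 4/s² + 4/s) ≤ (1 + 2·arccos(−2/s))/s + √(1 − 4/s²)`; equivalently
`1 + 4/s ≤ (1 + 2·arccos(−2/s))/s + √(1 − 4/s²)`. -/
theorem halfChord_phaseI_crude (s : ℝ) (hs : 2 ≤ s) :
    2 / s + Real.sqrt (1 + 4 / s ^ 2 + 4 / s) ≤
      (1 + 2 * Real.arccos (-2 / s)) / s + Real.sqrt (1 - 4 / s ^ 2) ∧
    1 + 4 / s ≤ (1 + 2 * Real.arccos (-2 / s)) / s + Real.sqrt (1 - 4 / s ^ 2) := by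
  have hs₀ : 0 < s := by linarith
  have hx₁ : 2 / s ≤ π / 2 := by
    rw [div_le_iff₀ hs₀]
    nlinarith [pi_gt_three]
  have hrhs : 1 + 4 / s ≤ (1 + 2 * arccos (-2 / s)) / s + √(1 - 4 / s ^ 2) :=
    calc 1 + 4 / s = 1 + 2 * (2 / s) := by ring
      _ ≤ (1 + 2 * arccos (-(2 / s))) * (2 / s) / 2 + √(1 - (2 / s) ^ 2) :=
        one_add_two_mul_le_halfChord (by positivity) hx₁
      _ = _ := by rw [neg_div]; ring_nf
  have hlhs : 2 / s + √(1 + 4 / s ^ 2 + 4 / s) = 1 + 4 / s := by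
    rw [show 1 + 4 / s ^ 2 + 4 / s = (1 + 2 / s) ^ 2 by ring, sqrt_sq (by positivity)]
    ring
  exact ⟨hlhs.trans_le hrhs, hrhs⟩
end

section
/- Let s ≥ 2 be real, let φ = arccos(−2/s), and let τ ∈ [0, (2φ − 1)/s]. Identify the plane with the complex numbers, with the unit disk centered at 0. Then the distance between the point S = (2/s)·exp(i(π + φ − sτ/2)) and the point E = exp(i(2φ − sτ)) satisfies |S − E| ≤ τ + √(1 − 4/s²). (This is the key estimate for Phase II of the Half-Chord strategy: if the fast robot, exploring the boundary counterclockwise, finds the exit E with τ time units remaining in Phase II, the slow robot, located at S on the circle of radius 2/s, can reach the exit within τ + √(1 − 4/s²) additional time.) -/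
open Real Complex

/-!
Write `r = 2/s`, `φ = arccos (-r)` and `σ = sτ/2`. Rotating by `exp (-i(φ - 2σ))` maps `S` and `E`
to `-r exp(iσ)` and `exp(iφ)`, so `|S - E| = |r exp(iσ) + exp(iφ)|`. Moving the first point back
along its circle to `r` costs at most the arc length `rσ = τ`, and `|r + exp(iφ)| = √(1 - r²)`
because `cos φ = -r`: this is the distance from the midpoint `M` of the chord to its end `A`.
-/

theorem Complex.sq_norm_ofReal_add_exp_I_mul (r φ : ℝ) :
    ‖(r : ℂ) + exp (I * φ)‖ ^ 2 = 1 + r ^ 2 + 2 * r * Real.cos φ := by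
  rw [mul_comm, exp_mul_I, ← ofReal_cos, ← ofReal_sin, ← add_assoc, ← ofReal_add, norm_add_mul_I,
    sq_sqrt (by positivity)]
  linear_combination Real.sin_sq_add_cos_sq φ

theorem Complex.norm_ofReal_add_exp_I_mul_arccos_neg {r : ℝ} (hr₀ : 0 ≤ r) (hr₁ : r ≤ 1) :
    ‖(r : ℂ) + exp (I * Real.arccos (-r))‖ = √(1 - r ^ 2) := by
  rw [← sq_eq_sq₀ (norm_nonneg _) (sqrt_nonneg _), sq_norm_ofReal_add_exp_I_mul,
    Real.cos_arccos (by linarith) (by linarith), sq_sqrt (by nlinarith)]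
  ring

theorem Complex.norm_ofReal_mul_exp_I_mul_add_le {r : ℝ} (hr : 0 ≤ r) (σ : ℝ) (w : ℂ) :
    ‖(r : ℂ) * exp (I * σ) + w‖ ≤ ‖(r : ℂ) + w‖ + r * |σ| :=
  calc ‖(r : ℂ) * exp (I * σ) + w‖ = ‖((r : ℂ) + w) + r * (exp (I * σ) - 1)‖ := by ring_nf
    _ ≤ ‖(r : ℂ) + w‖ + ‖(r : ℂ) * (exp (I * σ) - 1)‖ := norm_add_le _ _
    _ ≤ ‖(r : ℂ) + w‖ + r * |σ| := by
      rw [norm_mul, norm_real, Real.norm_of_nonneg hr]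
      gcongr
      exact norm_exp_I_mul_ofReal_sub_one_le

theorem Complex.norm_ofReal_mul_exp_I_mul_sub_exp_I_mul (r φ σ : ℝ) :
    ‖(r : ℂ) * exp (I * ↑(π + φ - σ)) - exp (I * ↑(2 * φ - 2 * σ))‖ =
      ‖(r : ℂ) * exp (I * σ) + exp (I * φ)‖ := by
  set a := exp (I * φ)
  set b := exp (I * σ)
  have h₁ : exp (I * ↑(π + φ - σ)) = -a / b := by
    rw [show I * ↑(π + φ - σ) = π * I + I * φ - I * σ by push_cast; ring, exp_sub, exp_add,
      exp_pi_mul_I, neg_one_mul]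
  have h₂ : exp (I * ↑(2 * φ - 2 * σ)) = (a / b) ^ 2 := by
    rw [show I * ↑(2 * φ - 2 * σ) = (2 : ℕ) * (I * φ - I * σ) by push_cast; ring, exp_nat_mul,
      exp_sub]
  have hb : b ≠ 0 := exp_ne_zero _
  have h₃ : (r : ℂ) * (-a / b) - (a / b) ^ 2 = -(a / b ^ 2) * (r * b + a) := by
    field_simp; ring
  rw [h₁, h₂, h₃, norm_mul, norm_neg, norm_div, norm_pow, norm_exp_I_mul_ofReal,
    norm_exp_I_mul_ofReal, one_pow, div_one, one_mul]

/-- Phase II estimate for the Half-Chord strategy: for `s ≥ 2`, `φ = arccos(−2/s)` and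
`τ ∈ [0, (2φ − 1)/s]`, the distance between `S = (2/s)·exp(i(π + φ − sτ/2))` and
`E = exp(i(2φ − sτ))` is at most `τ + √(1 − 4/s²)`. -/
theorem halfChord_phaseII (s τ : ℝ) (hs : 2 ≤ s)
    (hτ : τ ∈ Set.Icc (0 : ℝ) ((2 * Real.arccos (-2 / s) - 1) / s)) :
    ‖(((2 / s : ℝ) : ℂ) *
          Complex.exp (Complex.I * ((Real.pi + Real.arccos (-2 / s) - s * τ / 2 : ℝ) : ℂ)) -
        Complex.exp (Complex.I * ((2 * Real.arccos (-2 / s) - s * τ : ℝ) : ℂ)))‖ ≤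
    τ + Real.sqrt (1 - 4 / s ^ 2) := by
  have hs₀ : 0 < s := by linarith
  have hr₁ : 2 / s ≤ 1 := (div_le_one hs₀).2 hs
  have hσ : |s * τ / 2| = s * τ / 2 := abs_of_nonneg (by have := mul_nonneg hs₀.le hτ.1; linarith)
  have hrot := norm_ofReal_mul_exp_I_mul_sub_exp_I_mul (2 / s) (arccos (-2 / s)) (s * τ / 2)
  rw [show 2 * (s * τ / 2) = s * τ by ring] at hrot
  calc _ = ‖((2 / s : ℝ) : ℂ) * exp (I * ↑(s * τ / 2)) + exp (I * ↑(arccos (-2 / s)))‖ := hrot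
    _ ≤ ‖((2 / s : ℝ) : ℂ) + exp (I * ↑(arccos (-2 / s)))‖ + 2 / s * |s * τ / 2| :=
      norm_ofReal_mul_exp_I_mul_add_le (by positivity) _ _
    _ = τ + √(1 - 4 / s ^ 2) := by
      rw [neg_div, norm_ofReal_add_exp_I_mul_arccos_neg (by positivity) hr₁, hσ, div_pow,
        add_comm]
      field_simp
      norm_num
end

section
/- Let s ≥ 2 be real, let φ = arccos(−2/s), and let τ ∈ [0, (2π − 2φ)/s]. Identify the plane with the complex numbers, with the unit disk centered at 0. Set A = exp(2iφ), B = 1, M = (A + B)/2, and let C = M + τ·(B − M)/|B − M| be the point at distance τ from M on the segment from M to B. Then the distance between C and the point E = exp(i(2φ + sτ)) satisfies |C − E| ≤ √(1 − 4/s²) − τ. (This is the key estimate for Phase III of the Half-Chord strategy: if the fast robot, exploring the boundary counterclockwise past A, finds the exit E at time τ after the start of Phase III, the slow robot at C can reach the exit within the remaining √(1 − 4/s²) − τ time.) -/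
open Real Complex

/-!
Rotating by `exp (-φ i)` puts the chord `AB` on the vertical line `Re z = cos φ`: then `M`
becomes `cos φ`, `C` becomes `cos φ - τ i` and `E` becomes `exp ((φ + 2β) i)` with `β = sτ/2`,
so that `τ = -β cos φ`. A direct computation gives
`|C - E|² = (sin φ - τ)² - 4 (-cos φ) sin (φ + β) (sin β - β cos β)`,
and all three factors are nonnegative since `φ ∈ [π/2, π]`, `β ∈ [0, π - φ]` and
`x cos x ≤ sin x` on `[0, π]`.
-/

theorem Real.mul_cos_le_sin {x : ℝ} (h₀ : 0 ≤ x) (hπ : x ≤ π) : x * Real.cos x ≤ Real.sin x := by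
  rcases lt_or_ge x (π / 2) with hx | hx
  · have hcos : 0 < Real.cos x := Real.cos_pos_of_mem_Ioo ⟨by linarith [Real.pi_pos], hx⟩
    have := Real.le_tan h₀ hx
    rwa [Real.tan_eq_sin_div_cos, le_div_iff₀ hcos] at this
  · have hcos : Real.cos x ≤ 0 := Real.cos_nonpos_of_pi_div_two_le_of_le hx (by linarith)
    nlinarith [Real.sin_nonneg_of_nonneg_of_le_pi h₀ hπ]

theorem Complex.exp_two_I_mul_add_one_div_two (x : ℂ) :
    (exp (2 * I * x) + 1) / 2 = exp (x * I) * cos x := by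
  rw [Complex.cos, mul_div_assoc', mul_add, ← Complex.exp_add, ← Complex.exp_add]
  ring_nf
  rw [Complex.exp_zero]
  ring

theorem Complex.one_sub_exp_mul_I_mul_cos (x : ℂ) :
    1 - exp (x * I) * cos x = -I * sin x * exp (x * I) := by
  have h : exp (x * I) * exp (-x * I) = 1 := by rw [← Complex.exp_add]; simp
  rw [← h, Complex.exp_mul_I (-x), Complex.cos_neg, Complex.sin_neg]
  ring

theorem exp_mul_I_mul_cos_add_div_norm {φ τ : ℝ} (hτ₀ : 0 ≤ τ) (hτ : τ ≤ Real.sin φ) :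
    exp (φ * I) * Real.cos φ + τ * (1 - exp (φ * I) * Real.cos φ) / ‖1 - exp (φ * I) * Real.cos φ‖
      = exp (φ * I) * (Real.cos φ - τ * I) := by
  rw [ofReal_cos, one_sub_exp_mul_I_mul_cos, ← ofReal_sin, norm_mul, norm_mul, norm_neg,
    norm_I, norm_exp_ofReal_mul_I, norm_real, Real.norm_of_nonneg (hτ₀.trans hτ)]
  rcases (hτ₀.trans hτ).lt_or_eq with hsin | hsin
  · have : (Real.sin φ : ℂ) ≠ 0 := ofReal_ne_zero.2 hsin.ne'
    field_simp
    ring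
  · obtain rfl : τ = 0 := by linarith
    simp

theorem norm_cos_mul_one_add_I_sub_exp_sq (φ β : ℝ) :
    ‖(Real.cos φ : ℂ) * (1 + β * I) - exp ((φ + 2 * β : ℝ) * I)‖ ^ 2
      = (Real.sin φ + β * Real.cos φ) ^ 2
        - 4 * (-Real.cos φ) * Real.sin (φ + β) * (Real.sin β - β * Real.cos β) := by
  have hcos : Real.cos (φ + 2 * β) - Real.cos φ = -2 * Real.sin (φ + β) * Real.sin β := by
    rw [Real.cos_sub_cos]; ring_nf
  have hsin : Real.sin (φ + 2 * β) + Real.sin φ = 2 * Real.sin (φ + β) * Real.cos β := by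
    rw [Real.sin_add_sin]; ring_nf
  rw [Complex.sq_norm, Complex.normSq_apply]
  simp only [sub_re, sub_im, mul_re, mul_im, add_re, add_im, ofReal_re, ofReal_im, one_re, one_im,
    I_re, I_im, exp_ofReal_mul_I_re, exp_ofReal_mul_I_im]
  linear_combination (Real.sin_sq_add_cos_sq (φ + 2 * β)) - Real.sin_sq_add_cos_sq φ
    + (-2 * Real.cos φ) * hcos + (-2 * β * Real.cos φ) * hsin

theorem neg_mul_cos_le_sin {φ β : ℝ} (hφ : π / 2 ≤ φ) (hβ₀ : 0 ≤ β) (hβ : β ≤ π - φ) :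
    -(β * Real.cos φ) ≤ Real.sin φ := by
  have hcos : Real.cos φ ≤ 0 := Real.cos_nonpos_of_pi_div_two_le_of_le hφ (by linarith)
  have := Real.mul_cos_le_sin (x := π - φ) (by linarith) (by linarith)
  rw [Real.cos_pi_sub, Real.sin_pi_sub] at this
  nlinarith

theorem norm_cos_mul_one_add_I_sub_exp_le {φ β : ℝ} (hφ : π / 2 ≤ φ) (hβ₀ : 0 ≤ β)
    (hβ : β ≤ π - φ) :
    ‖(Real.cos φ : ℂ) * (1 + β * I) - exp ((φ + 2 * β : ℝ) * I)‖
      ≤ Real.sin φ + β * Real.cos φ := by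
  have hcos : 0 ≤ -Real.cos φ :=
    neg_nonneg.2 (Real.cos_nonpos_of_pi_div_two_le_of_le hφ (by linarith))
  have hsin : 0 ≤ Real.sin (φ + β) :=
    Real.sin_nonneg_of_nonneg_of_le_pi (by linarith [Real.pi_pos]) (by linarith)
  have hβcos : 0 ≤ Real.sin β - β * Real.cos β :=
    sub_nonneg.2 (Real.mul_cos_le_sin hβ₀ (by linarith))
  refine le_of_pow_le_pow_left₀ two_ne_zero ?_ ?_
  · linarith [neg_mul_cos_le_sin hφ hβ₀ hβ]
  · rw [norm_cos_mul_one_add_I_sub_exp_sq]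
    nlinarith [mul_nonneg (mul_nonneg hcos hsin) hβcos]

/-- Phase III estimate for the Half-Chord strategy: for `s ≥ 2`, `φ = arccos(−2/s)`,
`τ ∈ [0, (2π − 2φ)/s]`, with `A = exp(2iφ)`, `B = 1`, `M = (A+B)/2` and
`C = M + τ·(B − M)/|B − M|`, the distance between `C` and `E = exp(i(2φ + sτ))`
is at most `√(1 − 4/s²) − τ`. -/
theorem halfChord_phaseIII (s τ : ℝ) (hs : 2 ≤ s)
    (hτ : τ ∈ Set.Icc (0 : ℝ) ((2 * Real.pi - 2 * Real.arccos (-2 / s)) / s))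
    (A B M C E : ℂ)
    (hA : A = Complex.exp (2 * Complex.I * ((Real.arccos (-2 / s) : ℝ) : ℂ)))
    (hB : B = 1)
    (hM : M = (A + B) / 2)
    (hC : C = M + (τ : ℂ) * (B - M) / ((‖B - M‖ : ℝ) : ℂ))
    (hE : E = Complex.exp (Complex.I * ((2 * Real.arccos (-2 / s) + s * τ : ℝ) : ℂ))) :
    ‖C - E‖ ≤ Real.sqrt (1 - 4 / s ^ 2) - τ := by
  obtain ⟨hτ₀, hτ₁⟩ := hτ
  have hs₀ : 0 < s := by linarith
  set φ := Real.arccos (-2 / s)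
  have hcos : Real.cos φ = -2 / s :=
    Real.cos_arccos (by rw [le_div_iff₀ hs₀]; linarith) (by rw [div_le_iff₀ hs₀]; linarith)
  have hφ : π / 2 ≤ φ := not_lt.1 fun h ↦
    (arccos_lt_pi_div_two.1 h).not_ge (div_nonpos_of_nonpos_of_nonneg (by norm_num) hs₀.le)
  set β := s * τ / 2 with hβ_def
  have hτβ : τ = -(β * Real.cos φ) := by rw [hcos, hβ_def]; field_simp
  have hβ : β ≤ π - φ := by
    have := (le_div_iff₀ hs₀).1 hτ₁
    linarith [hβ_def]
  have hβ₀ : 0 ≤ β := by positivity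
  rw [hA, hB, exp_two_I_mul_add_one_div_two, ← ofReal_cos] at hM
  rw [hM, hB, exp_mul_I_mul_cos_add_div_norm hτ₀ (by linarith [neg_mul_cos_le_sin hφ hβ₀ hβ])]
    at hC
  have hE' : E = exp (φ * I) * exp ((φ + 2 * β : ℝ) * I) := by
    rw [hE, ← Complex.exp_add]; congr 1; push_cast [hβ_def]; ring
  calc ‖C - E‖ = ‖(Real.cos φ : ℂ) * (1 + β * I) - exp ((φ + 2 * β : ℝ) * I)‖ := by
        rw [hC, hE', ← mul_sub, norm_mul, norm_exp_ofReal_mul_I, one_mul, hτβ]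
        push_cast; ring_nf
    _ ≤ Real.sin φ + β * Real.cos φ := norm_cos_mul_one_add_I_sub_exp_le hφ hβ₀ hβ
    _ = √(1 - 4 / s ^ 2) - τ := by
        rw [Real.sin_arccos, hτβ]; ring_nf
end

section
/- For every real s ∈ [1, 2], the value 1 + √(2 − 2·cos(s − 1)) is the greatest value of the function f(a) = (a + 1)/s + √(1 + ((a+1)/s)² − 2·((a+1)/s)·cos(a)) over a ∈ [0, s − 1]; that is, f(a) ≤ 1 + √(2 − 2·cos(s−1)) for all a ∈ [0, s−1], with equality at a = s − 1. (This is the worst-case evacuation time of the Both-to-the-Same-Point strategy when the exit is found before the slow robot reaches the boundary.) -/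
/-!
With `t = (a + 1) / s ≤ 1`, the evacuation time is `t + ‖t • u - v‖` for unit vectors `u`, `v` at
angle `a`. Since `a ≤ s - 1 ≤ 1 < π`, widening the angle to `s - 1` can only increase the distance,
and then `‖t • u - v‖ ≤ ‖t • u - u‖ + ‖u - v‖ = (1 - t) + √(2 - 2 cos (s - 1))`.
-/

open Real

lemma sqrt_one_add_sq_sub_mul_le_of_le {t c c' : ℝ} (ht : 0 ≤ t) (hc : c' ≤ c) :
    √(1 + t ^ 2 - 2 * t * c) ≤ √(1 + t ^ 2 - 2 * t * c') :=
  sqrt_le_sqrt (by nlinarith)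

lemma sqrt_one_add_sq_sub_mul_le {t c : ℝ} (ht : t ≤ 1) (hc : c ≤ 1) :
    √(1 + t ^ 2 - 2 * t * c) ≤ 1 - t + √(2 - 2 * c) := by
  have hsq : √(2 - 2 * c) ^ 2 = 2 - 2 * c := sq_sqrt (by linarith)
  have hnonneg : 0 ≤ (1 - t) * √(2 - 2 * c) := mul_nonneg (by linarith) (sqrt_nonneg _)
  rw [sqrt_le_iff]
  constructor
  · linarith [sqrt_nonneg (2 - 2 * c)]
  · nlinarith [mul_nonneg (sub_nonneg.2 ht) (sub_nonneg.2 hc)]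

/-- BSP strategy, exit found before the slow robot reaches the boundary:
for `s ∈ [1,2]`, `1 + √(2 − 2cos(s−1))` is the greatest value of
`f(a) = (a+1)/s + √(1 + ((a+1)/s)² − 2·((a+1)/s)·cos a)` over `a ∈ [0, s−1]`,
with equality at `a = s − 1`. -/
theorem bsp_before_boundary (s : ℝ) (hs : s ∈ Set.Icc (1 : ℝ) 2) :
    (∀ a ∈ Set.Icc (0 : ℝ) (s - 1),
      (a + 1) / s +
          Real.sqrt (1 + ((a + 1) / s) ^ 2 - 2 * ((a + 1) / s) * Real.cos a) ≤
        1 + Real.sqrt (2 - 2 * Real.cos (s - 1))) ∧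
    (s - 1 + 1) / s +
        Real.sqrt (1 + ((s - 1 + 1) / s) ^ 2 - 2 * ((s - 1 + 1) / s) * Real.cos (s - 1)) =
      1 + Real.sqrt (2 - 2 * Real.cos (s - 1)) := by
  obtain ⟨hs1, hs2⟩ := hs
  have hs0 : 0 < s := by linarith
  refine ⟨fun a ⟨ha0, ha1⟩ => ?_, ?_⟩
  · have hcos : cos (s - 1) ≤ cos a :=
      cos_le_cos_of_nonneg_of_le_pi ha0 (by linarith [pi_gt_three]) ha1
    have ht1 : (a + 1) / s ≤ 1 := (div_le_one hs0).2 (by linarith)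
    have ht0 : 0 ≤ (a + 1) / s := by positivity
    linarith [sqrt_one_add_sq_sub_mul_le_of_le ht0 hcos,
      sqrt_one_add_sq_sub_mul_le ht1 (cos_le_one (s - 1))]
  · rw [sub_add_cancel, div_self hs0.ne']
    norm_num
end

section
/- For every real s ∈ [1, 2], the function f(a) = (a + 1)/s + √(1 + ((a+1)/s)² − 2·((a+1)/s)·cos(a)) is monotone nondecreasing in a on the interval [0, s − 1]. -/
/-!
Write `u = (a + 1) / s`. By the law of cosines the square root is the distance `‖u - e^{ia}‖`
from the point `u` of the real axis to the point `e^{ia}` of the unit circle. This distance is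
`1`-Lipschitz in `u`, so when `a` grows, the loss in the distance is at most the gain in `u`;
and for fixed `u ≥ 0` it grows with `a ∈ [0, π]`, since `cos` decreases there.
-/

open Real

lemma sqrt_one_add_sq_sub_mul_cos_eq_norm (u a : ℝ) :
    √(1 + u ^ 2 - 2 * u * cos a) = ‖(u : ℂ) - Complex.exp (a * Complex.I)‖ := by
  rw [Complex.norm_def, Complex.normSq_apply]
  congr 1
  simp [Complex.exp_ofReal_mul_I_re, Complex.exp_ofReal_mul_I_im]
  nlinarith [sin_sq_add_cos_sq a]

lemma abs_sqrt_one_add_sq_sub_mul_cos_sub_le (u v a : ℝ) :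
    |√(1 + u ^ 2 - 2 * u * cos a) - √(1 + v ^ 2 - 2 * v * cos a)| ≤ |u - v| := by
  simp only [sqrt_one_add_sq_sub_mul_cos_eq_norm]
  calc _ ≤ ‖((u : ℂ) - Complex.exp (a * Complex.I)) - ((v : ℂ) - Complex.exp (a * Complex.I))‖ :=
        abs_norm_sub_norm_le _ _
    _ = |u - v| := by rw [sub_sub_sub_cancel_right, ← Complex.ofReal_sub, Complex.norm_real,
        Real.norm_eq_abs]

lemma sqrt_one_add_sq_sub_mul_cos_le_of_le {u a b : ℝ} (hu : 0 ≤ u) (ha : 0 ≤ a) (hb : b ≤ π)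
    (hab : a ≤ b) :
    √(1 + u ^ 2 - 2 * u * cos a) ≤ √(1 + u ^ 2 - 2 * u * cos b) := by
  gcongr
  exact cos_le_cos_of_nonneg_of_le_pi ha hb hab

theorem monotoneOn_add_sqrt_one_add_sq_sub_mul_cos {u : ℝ → ℝ} {S : Set ℝ}
    (hS : S ⊆ Set.Icc 0 π) (hmono : MonotoneOn u S) (hnonneg : ∀ a ∈ S, 0 ≤ u a) :
    MonotoneOn (fun a => u a + √(1 + u a ^ 2 - 2 * u a * cos a)) S := by
  intro a ha b hb hab
  have hu : u a ≤ u b := hmono ha hb hab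
  have hlip := (abs_le.mp (abs_sqrt_one_add_sq_sub_mul_cos_sub_le (u b) (u a) b)).1
  have hcos := sqrt_one_add_sq_sub_mul_cos_le_of_le (hnonneg a ha) (hS ha).1 (hS hb).2 hab
  rw [abs_of_nonneg (sub_nonneg.mpr hu)] at hlip
  linarith

/-- For `s ∈ [1,2]`, the function
`f(a) = (a+1)/s + √(1 + ((a+1)/s)² − 2·((a+1)/s)·cos a)`
is monotone nondecreasing on `[0, s − 1]`. -/
theorem bsp_before_boundary_monotone (s : ℝ) (hs : s ∈ Set.Icc (1 : ℝ) 2) :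
    MonotoneOn
      (fun a : ℝ =>
        (a + 1) / s +
          Real.sqrt (1 + ((a + 1) / s) ^ 2 - 2 * ((a + 1) / s) * Real.cos a))
      (Set.Icc (0 : ℝ) (s - 1)) := by
  obtain ⟨hs1, hs2⟩ := hs
  have hs0 : 0 ≤ s := by linarith
  refine monotoneOn_add_sqrt_one_add_sq_sub_mul_cos (u := fun a => (a + 1) / s) ?_ ?_ ?_
  · exact Set.Icc_subset_Icc le_rfl (by linarith [pi_gt_three])
  · exact fun a _ b _ hab => div_le_div_of_nonneg_right (by linarith) hs0
  · exact fun a ha => div_nonneg (by linarith [ha.1]) hs0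
end

section
/- For every real s ∈ [1, 2], the value (2s + π + 4)/(s + 1) is the greatest value of the function g(d) = 1 + d/s + 2·sin((d·(1 + 1/s) + s − 1)/2) over d ∈ [0, s(π − s + 1)/(s + 1)]; that is, g(d) ≤ (2s + π + 4)/(s+1) on this interval, with equality at d = s(π − s + 1)/(s + 1). (This is the worst-case evacuation time of the Both-to-the-Same-Point strategy when the angle between the two robots at the moment the exit is found is at most π.) -/
/-!
At the right endpoint `D = s(π − s + 1)/(s + 1)` the sine argument is exactly `π/2`, so the
sine term attains its maximum `1` there; the linear term `d / s` is increasing in `d`. Hence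
both summands of `g` are maximal at `D`, and `g D = (2s + π + 4)/(s + 1)`.
-/

open Real

lemma bsp_explored_arc_at_endpoint {s : ℝ} (hs : s ≠ 0) (hs1 : s + 1 ≠ 0) :
    s * (π - s + 1) / (s + 1) * (1 + 1 / s) + s - 1 = π := by
  field_simp
  ring

lemma bsp_value_at_endpoint {s : ℝ} (hs : s ≠ 0) (hs1 : s + 1 ≠ 0) :
    1 + s * (π - s + 1) / (s + 1) / s + 2 = (2 * s + π + 4) / (s + 1) := by
  field_simp
  ring

/-- BSP strategy, angle at most π case: for `s ∈ [1,2]`, `(2s + π + 4)/(s+1)` is the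
greatest value of `g(d) = 1 + d/s + 2·sin((d·(1 + 1/s) + s − 1)/2)` over
`d ∈ [0, s(π − s + 1)/(s + 1)]`, with equality at `d = s(π − s + 1)/(s + 1)`. -/
theorem bsp_angle_le_pi (s : ℝ) (hs : s ∈ Set.Icc (1 : ℝ) 2) :
    (∀ d ∈ Set.Icc (0 : ℝ) (s * (Real.pi - s + 1) / (s + 1)),
      1 + d / s + 2 * Real.sin ((d * (1 + 1 / s) + s - 1) / 2) ≤
        (2 * s + Real.pi + 4) / (s + 1)) ∧
    1 + (s * (Real.pi - s + 1) / (s + 1)) / s +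
        2 * Real.sin (((s * (Real.pi - s + 1) / (s + 1)) * (1 + 1 / s) + s - 1) / 2) =
      (2 * s + Real.pi + 4) / (s + 1) := by
  have hs0 : 0 < s := one_pos.trans_le hs.1
  have hs1 : s + 1 ≠ 0 := by positivity
  refine ⟨fun d hd => ?_, ?_⟩
  · calc 1 + d / s + 2 * sin ((d * (1 + 1 / s) + s - 1) / 2)
        ≤ 1 + s * (π - s + 1) / (s + 1) / s + 2 * 1 := by
          gcongr
          · exact hd.2
          · exact sin_le_one _
      _ = (2 * s + π + 4) / (s + 1) := by
          rw [mul_one, bsp_value_at_endpoint hs0.ne' hs1]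
  · rw [bsp_explored_arc_at_endpoint hs0.ne' hs1, sin_pi_div_two, mul_one,
      bsp_value_at_endpoint hs0.ne' hs1]
end

section
/- For every real s ∈ [1, 2], both 1 + √(2 − 2·cos(s − 1)) ≤ 1 + 2·√(1 − 1/(s+1)²) + (2·arccos(−1/(s+1)) − s + 1)/(s + 1) and (2s + π + 4)/(s + 1) ≤ 1 + 2·√(1 − 1/(s+1)²) + (2·arccos(−1/(s+1)) − s + 1)/(s + 1). (Hence the overall worst-case evacuation time of the Both-to-the-Same-Point strategy for s ∈ [1, 2] is BSP(s) = 1 + 2·√(1 − 1/(s+1)²) + (2·arccos(−1/(s+1)) − s + 1)/(s + 1).) -/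
/-!
Put `x = 1/(s+1)`, so that `arccos (-x) = π/2 + arcsin x`. After multiplying by `s + 1`, the
second inequality becomes `1 - √(1 - x²) ≤ x · arcsin x`, which follows from
`1 - √(1 - x²) ≤ x²` and `x ≤ arcsin x`; it holds for every `s ≥ 0`. For the first, `cos (s - 1) ≥ 0`
and `x ≤ 1/2` give `√(2 - 2 cos (s - 1)) ≤ √2 ≤ 2√(1 - x²)`, and the remaining fraction of `BSP(s)`
is nonnegative.
-/

open Real

theorem Real.le_arcsin_self {x : ℝ} (hx₀ : 0 ≤ x) (hx₁ : x ≤ 1) : x ≤ arcsin x := by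
  simpa [sin_arcsin (by linarith) hx₁] using sin_le (arcsin_nonneg.2 hx₀)

theorem Real.arccos_neg_eq_pi_div_two_add_arcsin (x : ℝ) : arccos (-x) = π / 2 + arcsin x := by
  rw [arccos_neg, arccos_eq_pi_div_two_sub_arcsin]; ring

theorem one_sub_sqrt_one_sub_sq_le_sq (x : ℝ) : 1 - √(1 - x ^ 2) ≤ x ^ 2 := by
  have : 1 - x ^ 2 ≤ √(1 - x ^ 2) := Real.le_sqrt_self_iff.2 (by nlinarith [sq_nonneg x])
  linarith

theorem one_sub_sqrt_one_sub_sq_le_mul_arcsin {x : ℝ} (hx₀ : 0 ≤ x) (hx₁ : x ≤ 1) :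
    1 - √(1 - x ^ 2) ≤ x * arcsin x :=
  calc 1 - √(1 - x ^ 2) ≤ x ^ 2 := one_sub_sqrt_one_sub_sq_le_sq x
    _ = x * x := sq x
    _ ≤ x * arcsin x := mul_le_mul_of_nonneg_left (le_arcsin_self hx₀ hx₁) hx₀

noncomputable def bspTime (s : ℝ) : ℝ :=
  1 + 2 * √(1 - 1 / (s + 1) ^ 2) + (2 * arccos (-1 / (s + 1)) - s + 1) / (s + 1)

theorem bspTime_eq (s : ℝ) :
    bspTime s = 1 + 2 * √(1 - (s + 1)⁻¹ ^ 2) + (π + 2 * arcsin (s + 1)⁻¹ - s + 1) / (s + 1) := by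
  rw [bspTime, one_div, inv_pow, neg_div, one_div, arccos_neg_eq_pi_div_two_add_arcsin]
  ring

theorem two_mul_add_pi_add_four_div_le_bspTime {s : ℝ} (hs : 0 ≤ s) :
    (2 * s + π + 4) / (s + 1) ≤ bspTime s := by
  set x := (s + 1)⁻¹ with hx
  have ht : 0 < s + 1 := by linarith
  have hx₀ : 0 ≤ x := by positivity
  have hx₁ : x ≤ 1 := inv_le_one_of_one_le₀ (by linarith)
  have hxt : x * (s + 1) = 1 := inv_mul_cancel₀ ht.ne'
  have key : (s + 1) - (s + 1) * √(1 - x ^ 2) ≤ arcsin x := by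
    have := mul_le_mul_of_nonneg_left (one_sub_sqrt_one_sub_sq_le_mul_arcsin hx₀ hx₁) ht.le
    rwa [mul_sub, mul_one, ← mul_assoc, mul_comm (s + 1) x, hxt, one_mul] at this
  rw [bspTime_eq, ← hx, div_le_iff₀ ht]
  have : (1 + 2 * √(1 - x ^ 2) + (π + 2 * arcsin x - s + 1) / (s + 1)) * (s + 1) =
      (s + 1) * (1 + 2 * √(1 - x ^ 2)) + π + 2 * arcsin x - s + 1 := by
    field_simp; ring
  rw [this]
  linarith

theorem one_add_sqrt_two_sub_two_cos_le_bspTime {s : ℝ} (hs₁ : 1 ≤ s) (hs₂ : s ≤ 1 + π / 2) :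
    1 + √(2 - 2 * cos (s - 1)) ≤ bspTime s := by
  set x := (s + 1)⁻¹ with hx
  have ht : 0 < s + 1 := by linarith
  have hx₀ : 0 ≤ x := by positivity
  have hx₁ : x ≤ 1 / 2 := by
    rw [hx, ← one_div]; exact one_div_le_one_div_of_le (by norm_num) (by linarith)
  have hcos : 0 ≤ cos (s - 1) :=
    cos_nonneg_of_neg_pi_div_two_le_of_le (by linarith [pi_pos]) (by linarith)
  have hsqrt : √(2 - 2 * cos (s - 1)) ≤ 2 * √(1 - x ^ 2) :=
    calc √(2 - 2 * cos (s - 1)) ≤ √(2 ^ 2 * (1 - x ^ 2)) := sqrt_le_sqrt (by nlinarith)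
      _ = 2 * √(1 - x ^ 2) := by rw [sqrt_mul (by norm_num), sqrt_sq (by norm_num)]
  have harcsin : 0 ≤ arcsin x := arcsin_nonneg.2 hx₀
  have hrest : 0 ≤ (π + 2 * arcsin x - s + 1) / (s + 1) :=
    div_nonneg (by linarith [pi_gt_three]) ht.le
  rw [bspTime_eq, ← hx]
  linarith

/-- For `s ∈ [1,2]`, both case bounds of the BSP strategy are dominated by
`BSP(s) = 1 + 2·√(1 − 1/(s+1)²) + (2·arccos(−1/(s+1)) − s + 1)/(s + 1)`. -/
theorem bsp_dominant_case (s : ℝ) (hs : s ∈ Set.Icc (1 : ℝ) 2) :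
    1 + Real.sqrt (2 - 2 * Real.cos (s - 1)) ≤
      1 + 2 * Real.sqrt (1 - 1 / (s + 1) ^ 2) +
        (2 * Real.arccos (-1 / (s + 1)) - s + 1) / (s + 1) ∧
    (2 * s + Real.pi + 4) / (s + 1) ≤
      1 + 2 * Real.sqrt (1 - 1 / (s + 1) ^ 2) +
        (2 * Real.arccos (-1 / (s + 1)) - s + 1) / (s + 1) :=
  ⟨one_add_sqrt_two_sub_two_cos_le_bspTime hs.1 (by linarith [hs.2, pi_gt_three]),
    two_mul_add_pi_add_four_div_le_bspTime (by linarith [hs.1])⟩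
end

section
/- For every real s ≥ 2, the value (1 + 2·arccos(−2/s))/s + √(1 − 4/s²) is the greatest value of the function h(a) = (1 + a)/s + sin(a/2) over a ∈ [π, 2π]; that is, h(a) ≤ (1 + 2·arccos(−2/s))/s + √(1 − 4/s²) for all a ∈ [π, 2π], with equality at a = 2·arccos(−2/s). (This is the lower bound on the evacuation time of any fast-explores strategy for s ≥ 2.) -/
/-!
Since `sin` is concave on `[0, π]`, it lies below its tangent line at `x₀ = arccos (-2 / s)`,
whose slope is `cos x₀ = -2 / s`. For `a ∈ [π, 2π]` this gives
`sin (a / 2) ≤ sin x₀ - (a - 2 x₀) / s`, i.e. `h a ≤ h (2 x₀)`, and `sin x₀ = √(1 - 4 / s²)`.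
-/

open Real Set

theorem ConcaveOn.le_add_mul_sub_of_hasDerivAt {S : Set ℝ} {f : ℝ → ℝ} {x y f' : ℝ}
    (hf : ConcaveOn ℝ S f) (hx : x ∈ S) (hy : y ∈ S) (hf' : HasDerivAt f f' x) :
    f y ≤ f x + f' * (y - x) := by
  rcases lt_trichotomy x y with hxy | rfl | hyx
  · have hslope := hf.slope_le_of_hasDerivAt hx hy hxy hf'
    rw [slope_def_field, div_le_iff₀ (sub_pos.2 hxy)] at hslope
    linarith
  · simp
  · have hslope := hf.le_slope_of_hasDerivAt hy hx hyx hf'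
    rw [slope_def_field, le_div_iff₀ (sub_pos.2 hyx)] at hslope
    linarith

theorem Real.sin_le_sin_add_cos_mul_sub {x y : ℝ} (hx : x ∈ Icc 0 π) (hy : y ∈ Icc 0 π) :
    sin y ≤ sin x + cos x * (y - x) :=
  strictConcaveOn_sin_Icc.concaveOn.le_add_mul_sub_of_hasDerivAt hx hy (hasDerivAt_sin x)

/-- FES lower bound for `s ≥ 2`: `(1 + 2·arccos(−2/s))/s + √(1 − 4/s²)` is the greatest
value of `h(a) = (1 + a)/s + sin(a/2)` over `a ∈ [π, 2π]`, with equality at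
`a = 2·arccos(−2/s)`. -/
theorem fes_lower_bound_max (s : ℝ) (hs : 2 ≤ s) :
    (∀ a ∈ Set.Icc Real.pi (2 * Real.pi),
      (1 + a) / s + Real.sin (a / 2) ≤
        (1 + 2 * Real.arccos (-2 / s)) / s + Real.sqrt (1 - 4 / s ^ 2)) ∧
    (1 + 2 * Real.arccos (-2 / s)) / s + Real.sin (2 * Real.arccos (-2 / s) / 2) =
      (1 + 2 * Real.arccos (-2 / s)) / s + Real.sqrt (1 - 4 / s ^ 2) := by
  set x₀ := arccos (-2 / s)
  have hx₀ : x₀ ∈ Icc 0 π := ⟨arccos_nonneg _, arccos_le_pi _⟩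
  have hsin : sin x₀ = √(1 - 4 / s ^ 2) := by
    rw [sin_arccos, div_pow]
    norm_num
  have hcos : cos x₀ = -2 / s := by
    have hs0 : 0 < s := by linarith
    have h2s : 2 / s ≤ 1 := (div_le_one hs0).2 hs
    exact cos_arccos (by rw [neg_div]; linarith) (by rw [neg_div]; linarith [div_pos two_pos hs0])
  rw [mul_div_cancel_left₀ x₀ two_ne_zero, hsin]
  refine ⟨fun a ha => ?_, rfl⟩
  have htangent := sin_le_sin_add_cos_mul_sub hx₀ (y := a / 2)
    ⟨by linarith [pi_pos, ha.1], by linarith [ha.2]⟩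
  rw [hcos, hsin] at htangent
  linear_combination htangent
end

section
/- Let s ≥ 2 be real and suppose (s − 1)/2 ≤ arccos(−2/(s+1)). Then the value 1 + √(1 − 4/(s+1)²) + (2·arccos(−2/(s+1)) − s + 1)/(s + 1) is the greatest value of the function G(y) = 1 + y + sin((s + (s+1)·y − 1)/2) over y ∈ [max{0, (π − s + 1)/(s + 1)}, (2π − s + 1)/(s + 1)]; the maximum is attained at y = (2·arccos(−2/(s+1)) − s + 1)/(s + 1). (This is the both-explore lower bound on evacuation time for s ∈ [2, c₄.₈₄], where c₄.₈₄ ≈ 4.8406 is the speed at which (s−1)/2 = arccos(−2/(s+1)).) -/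
open Real Set

theorem sin_sub_mul_le_of_mem_Icc {c t : ℝ} (hc : c ∈ Icc (-1) 1) (ht : t ∈ Icc 0 π) :
    sin t - c * t ≤ √(1 - c ^ 2) - c * arccos c := by
  have h := strictConcaveOn_sin_Icc.concaveOn.le_add_mul_sub_of_hasDerivAt
    ⟨arccos_nonneg c, arccos_le_pi c⟩ ht (hasDerivAt_sin (arccos c))
  rw [sin_arccos, cos_arccos hc.1 hc.2] at h
  linarith

/-- BES lower bound for `s ∈ [2, c₄.₈₄]`: under `(s − 1)/2 ≤ arccos(−2/(s+1))`, the value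
`1 + √(1 − 4/(s+1)²) + (2·arccos(−2/(s+1)) − s + 1)/(s + 1)` is the greatest value of
`G(y) = 1 + y + sin((s + (s+1)·y − 1)/2)` over
`y ∈ [max 0 ((π − s + 1)/(s + 1)), (2π − s + 1)/(s + 1)]`, attained at
`y = (2·arccos(−2/(s+1)) − s + 1)/(s + 1)`. -/
theorem bes_lower_bound_mid_s (s : ℝ) (hs : 2 ≤ s)
    (hc : (s - 1) / 2 ≤ Real.arccos (-2 / (s + 1))) :
    (∀ y ∈ Set.Icc (max 0 ((Real.pi - s + 1) / (s + 1))) ((2 * Real.pi - s + 1) / (s + 1)),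
      1 + y + Real.sin ((s + (s + 1) * y - 1) / 2) ≤
        1 + Real.sqrt (1 - 4 / (s + 1) ^ 2) +
          (2 * Real.arccos (-2 / (s + 1)) - s + 1) / (s + 1)) ∧
    (2 * Real.arccos (-2 / (s + 1)) - s + 1) / (s + 1) ∈
      Set.Icc (max 0 ((Real.pi - s + 1) / (s + 1))) ((2 * Real.pi - s + 1) / (s + 1)) ∧
    1 + (2 * Real.arccos (-2 / (s + 1)) - s + 1) / (s + 1) +
        Real.sin ((s + (s + 1) * ((2 * Real.arccos (-2 / (s + 1)) - s + 1) / (s + 1)) - 1) / 2) =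
      1 + Real.sqrt (1 - 4 / (s + 1) ^ 2) +
        (2 * Real.arccos (-2 / (s + 1)) - s + 1) / (s + 1) := by
  have hs1 : 0 < s + 1 := by linarith
  have hc_nonpos : -2 / (s + 1) ≤ 0 := div_nonpos_of_nonpos_of_nonneg (by norm_num) hs1.le
  have hc_mem : -2 / (s + 1) ∈ Icc (-1) 1 :=
    ⟨by rw [le_div_iff₀ hs1]; linarith, hc_nonpos.trans zero_le_one⟩
  have hA_ge : π / 2 ≤ arccos (-2 / (s + 1)) := by
    rw [arccos_eq_pi_div_two_sub_arcsin]; linarith [arcsin_nonpos.2 hc_nonpos]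
  set A := arccos (-2 / (s + 1))
  have hsqrt : √(1 - (-2 / (s + 1)) ^ 2) = √(1 - 4 / (s + 1) ^ 2) := by
    rw [div_pow]; norm_num
  have hA_arg : (s + (s + 1) * ((2 * A - s + 1) / (s + 1)) - 1) / 2 = A := by
    rw [mul_div_cancel₀ _ hs1.ne']; ring
  refine ⟨fun y ⟨hy_lo, hy_hi⟩ => ?_, ⟨?_, ?_⟩, ?_⟩
  · have hy_lo' := (le_max_right _ _).trans hy_lo
    rw [div_le_iff₀ hs1] at hy_lo'
    rw [le_div_iff₀ hs1] at hy_hi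
    have h := sin_sub_mul_le_of_mem_Icc hc_mem (t := (s + (s + 1) * y - 1) / 2)
      ⟨by linarith [pi_pos], by linarith⟩
    calc 1 + y + sin ((s + (s + 1) * y - 1) / 2)
        = 1 - (s - 1) / (s + 1) + (sin ((s + (s + 1) * y - 1) / 2)
            - -2 / (s + 1) * ((s + (s + 1) * y - 1) / 2)) := by field_simp; ring
      _ ≤ 1 - (s - 1) / (s + 1) + (√(1 - (-2 / (s + 1)) ^ 2) - -2 / (s + 1) * A) := by gcongr
      _ = 1 + √(1 - 4 / (s + 1) ^ 2) + (2 * A - s + 1) / (s + 1) := by rw [hsqrt]; ring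
  · refine max_le (div_nonneg (by linarith) hs1.le) ?_
    gcongr; linarith
  · gcongr; linarith [arccos_le_pi (-2 / (s + 1))]
  · rw [hA_arg, sin_arccos, hsqrt]; ring
end

section
/- Let s be real with π + 1 ≤ s ≤ 2π + 1 and suppose arccos(−2/(s+1)) ≤ (s − 1)/2. Then for all y ∈ [0, (2π − s + 1)/(s + 1)], 1 + y + sin((s + (s+1)·y − 1)/2) ≤ 1 + sin((s − 1)/2), with equality at y = 0. (This is the both-explore lower bound on evacuation time for s ∈ (c₄.₈₄, 2π + 1), where c₄.₈₄ ≈ 4.8406 is the speed at which (s−1)/2 = arccos(−2/(s+1)).) -/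
/-!
Write `θ = (s + (s+1) y - 1)/2`, so that `y = (θ - c)/k` with `c = (s-1)/2`, `k = (s+1)/2`, and the
bound becomes `θ/k + sin θ ≤ c/k + sin c` for `c ≤ θ ≤ π`. The derivative `1/k + cos θ` of the left
side is nonpositive as soon as `θ ≥ arccos(-1/k)`, which the hypothesis grants from `θ = c` on.
-/

open Real Set

namespace Real

lemma cos_le_of_arccos_le {x θ : ℝ} (hx : -1 ≤ x) (hxθ : arccos x ≤ θ) (hθ : θ ≤ π) :
    cos θ ≤ x := by
  rcases le_or_gt x 1 with hx₁ | hx₁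
  · calc cos θ ≤ cos (arccos x) := cos_le_cos_of_nonneg_of_le_pi (arccos_nonneg x) hθ hxθ
      _ = x := cos_arccos hx hx₁
  · exact (cos_le_one θ).trans hx₁.le

lemma antitoneOn_div_add_sin {k : ℝ} (hk : 1 ≤ k) :
    AntitoneOn (fun θ ↦ θ / k + sin θ) (Icc (arccos (-1 / k)) π) := by
  refine antitoneOn_of_hasDerivWithinAt_nonpos (convex_Icc _ _)
    (by fun_prop) (f' := fun θ ↦ 1 / k + cos θ)
    (fun θ _ ↦ (((hasDerivAt_id θ).div_const k).add (hasDerivAt_sin θ)).hasDerivWithinAt)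
    fun θ hθ ↦ ?_
  rw [interior_Icc] at hθ
  have hk₀ : 0 < k := one_pos.trans_le hk
  have hk_inv : -1 ≤ -1 / k := by rw [neg_div, neg_le_neg_iff, div_le_one hk₀]; exact hk
  linarith [cos_le_of_arccos_le hk_inv hθ.1.le hθ.2.le, neg_div k 1]

end Real

theorem bes_lower_bound_large_s_general (s : ℝ)
    (hc : Real.arccos (-2 / (s + 1)) ≤ (s - 1) / 2) :
    (∀ y ∈ Set.Icc (0 : ℝ) ((2 * Real.pi - s + 1) / (s + 1)),
      1 + y + Real.sin ((s + (s + 1) * y - 1) / 2) ≤ 1 + Real.sin ((s - 1) / 2)) ∧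
    1 + (0 : ℝ) + Real.sin ((s + (s + 1) * 0 - 1) / 2) = 1 + Real.sin ((s - 1) / 2) := by
  have hs : 1 ≤ s := by linarith [arccos_nonneg (-2 / (s + 1))]
  have hk : 1 ≤ (s + 1) / 2 := by linarith
  have hkinv : -2 / (s + 1) = -1 / ((s + 1) / 2) := by field_simp
  refine ⟨fun y ⟨hy₀, hyB⟩ ↦ ?_, by norm_num⟩
  set θ := (s + (s + 1) * y - 1) / 2 with hθ_def
  have hθ : θ ≤ π := by rw [le_div_iff₀ (by linarith)] at hyB; linarith
  have hcθ : (s - 1) / 2 ≤ θ := by linarith [mul_nonneg (by linarith : 0 ≤ s + 1) hy₀]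
  rw [hkinv] at hc
  have hmono : θ / ((s + 1) / 2) + sin θ ≤ (s - 1) / 2 / ((s + 1) / 2) + sin ((s - 1) / 2) :=
    antitoneOn_div_add_sin hk ⟨hc, hcθ.trans hθ⟩ ⟨hc.trans hcθ, hθ⟩ hcθ
  have hy : y = θ / ((s + 1) / 2) - (s - 1) / 2 / ((s + 1) / 2) := by field_simp; ring
  linarith

/-- BES lower bound for `s ∈ (c₄.₈₄, 2π + 1)`: if `π + 1 ≤ s ≤ 2π + 1` and
`arccos(−2/(s+1)) ≤ (s − 1)/2`, then for all `y ∈ [0, (2π − s + 1)/(s + 1)]`,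
`1 + y + sin((s + (s+1)·y − 1)/2) ≤ 1 + sin((s − 1)/2)`, with equality at `y = 0`. -/
theorem bes_lower_bound_large_s (s : ℝ) (hs1 : Real.pi + 1 ≤ s) (hs2 : s ≤ 2 * Real.pi + 1)
    (hc : Real.arccos (-2 / (s + 1)) ≤ (s - 1) / 2) :
    (∀ y ∈ Set.Icc (0 : ℝ) ((2 * Real.pi - s + 1) / (s + 1)),
      1 + y + Real.sin ((s + (s + 1) * y - 1) / 2) ≤ 1 + Real.sin ((s - 1) / 2)) ∧
    1 + (0 : ℝ) + Real.sin ((s + (s + 1) * 0 - 1) / 2) = 1 + Real.sin ((s - 1) / 2) :=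
  bes_lower_bound_large_s_general s hc
end

section
/- Let s be real with π + 1 ≤ s and s − 1 ≤ 2·arccos(−2/s). Then the value 1 + sin((s − 1)/2) is the greatest value of the function h(a) = (1 + a)/s + sin(a/2) over a ∈ [π, s − 1]; the maximum is attained at a = s − 1. (This gives the both-explore lower bound 1 + sin((s−1)/2) for s ∈ (π + 1, c₄.₉₇], where c₄.₉₇ ≈ 4.9699 is the speed at which s − 1 = 2·arccos(−2/s), obtained by considering the moment before the slow robot has reached the boundary.) -/
open Real

/-!
The derivative of `h(a) = (1 + a)/s + sin(a/2)` is `1/s + cos(a/2)/2`, which is nonnegative as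
long as `cos(a/2) ≥ -2/s`, i.e. for `a ≤ 2·arccos(-2/s)`. The hypothesis `s - 1 ≤ 2·arccos(-2/s)`
therefore makes `h` nondecreasing on `[π, s - 1]`, so its maximum is `h(s - 1) = 1 + sin((s - 1)/2)`.
-/

theorem Real.le_cos_of_le_arccos {x y : ℝ} (hx : x ≤ 1) (hy₀ : 0 ≤ y) (hy : y ≤ arccos x) :
    x ≤ cos y := by
  rcases le_or_gt (-1) x with hx₁ | hx₁
  · calc x = cos (arccos x) := (cos_arccos hx₁ hx).symm
      _ ≤ cos y := cos_le_cos_of_nonneg_of_le_pi hy₀ (arccos_le_pi x) hy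
  · linarith [neg_one_le_cos y]

/-- The adversary's lower bound `h(a)` for a fast robot of speed `s` that has explored an arc of
length `a`. -/
noncomputable def bothExploreBound (s a : ℝ) : ℝ := (1 + a) / s + sin (a / 2)

theorem hasDerivAt_bothExploreBound (s a : ℝ) :
    HasDerivAt (bothExploreBound s) (1 / s + cos (a / 2) / 2) a := by
  have hlin : HasDerivAt (fun a : ℝ => (1 + a) / s) (1 / s) a := by
    simpa using ((hasDerivAt_id a).const_add 1).div_const s
  have hsin : HasDerivAt (fun a : ℝ => sin (a / 2)) (cos (a / 2) / 2) a := by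
    simpa [div_eq_mul_inv] using ((hasDerivAt_id a).div_const 2).sin
  exact hlin.add hsin

theorem monotoneOn_bothExploreBound {s : ℝ} (hs : 0 < s) :
    MonotoneOn (bothExploreBound s) (Set.Icc 0 (2 * arccos (-2 / s))) := by
  refine monotoneOn_of_hasDerivWithinAt_nonneg (convex_Icc _ _)
    (fun a _ => (hasDerivAt_bothExploreBound s a).continuousAt.continuousWithinAt)
    (fun a _ => (hasDerivAt_bothExploreBound s a).hasDerivWithinAt) ?_
  intro a ha
  rw [interior_Icc] at ha
  have hcos : -2 / s ≤ cos (a / 2) :=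
    le_cos_of_le_arccos (by rw [div_le_iff₀ hs]; linarith) (by linarith [ha.1])
      (by linarith [ha.2])
  have hzero : 1 / s + (-2 / s) / 2 = 0 := by ring
  linarith

/-- BES (antipodal) lower bound for `s ∈ (π + 1, c₄.₉₇]`: if `π + 1 ≤ s` and
`s − 1 ≤ 2·arccos(−2/s)`, then `1 + sin((s − 1)/2)` is the greatest value of
`h(a) = (1 + a)/s + sin(a/2)` over `a ∈ [π, s − 1]`, attained at `a = s − 1`. -/
theorem bes_antipodal_small (s : ℝ) (hs : Real.pi + 1 ≤ s)
    (hc : s - 1 ≤ 2 * Real.arccos (-2 / s)) :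
    (∀ a ∈ Set.Icc Real.pi (s - 1),
      (1 + a) / s + Real.sin (a / 2) ≤ 1 + Real.sin ((s - 1) / 2)) ∧
    (s - 1) ∈ Set.Icc Real.pi (s - 1) ∧
    (1 + (s - 1)) / s + Real.sin ((s - 1) / 2) = 1 + Real.sin ((s - 1) / 2) := by
  have hs₀ : 0 < s := by linarith [pi_pos]
  have hmem : s - 1 ∈ Set.Icc π (s - 1) := ⟨by linarith, le_rfl⟩
  have hend : bothExploreBound s (s - 1) = 1 + sin ((s - 1) / 2) := by
    rw [bothExploreBound, add_sub_cancel, div_self hs₀.ne']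
  have hmono : MonotoneOn (bothExploreBound s) (Set.Icc π (s - 1)) :=
    (monotoneOn_bothExploreBound hs₀).mono (Set.Icc_subset_Icc pi_pos.le hc)
  refine ⟨fun a ha => ?_, hmem, hend⟩
  rw [← hend]
  exact hmono ha hmem ha.2
end

section
/- For every real s with 1.86 ≤ s ≤ 2, one has (1 + 2π)/s ≤ 1 + 2·√(1 − 1/(s+1)²) + (2·arccos(−1/(s+1)) − s + 1)/(s + 1). (Hence on this range the generalized Half-Chord strategy, with worst-case evacuation time (1 + 2π)/s, outperforms the Both-to-the-Same-Point strategy, whose worst-case evacuation time is BSP(s).) -/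
/-!
With `c = 1/(s+1) ∈ [1/3, 50/143]` we have `s = (1 - c)/c` and `arccos (-c) = π/2 + arcsin c`,
so after clearing denominators the claim is an inequality between `c`, `π`, `arcsin c` and
`√(1 - c²)`. Replacing `arcsin c` and `√(1 - c²)` by Taylor lower bounds and `π` by `3.1416`
(its coefficient is negative) leaves a polynomial inequality in `c`, which holds on the interval
with a thin margin at `s = 1.86`.
-/

open Real

namespace Real

lemma add_cube_div_eight_le_arcsin {x : ℝ} (hx0 : 0 ≤ x) (hx1 : x ≤ 1 / 2) :
    x + x ^ 3 / 8 ≤ arcsin x := by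
  set y := x + x ^ 3 / 8 with hy
  have hy0 : 0 ≤ y := by positivity
  have hxy : x ≤ y := by linarith [pow_nonneg hx0 3]
  have hy1 : y ≤ 1 := by nlinarith [pow_le_pow_left₀ hx0 hx1 3]
  have hcube : x ^ 3 ≤ y ^ 3 := by gcongr
  have hy5 : y ^ 5 ≤ y ^ 3 := pow_le_pow_of_le_one hy0 hy1 (by norm_num)
  have hsin : sin y ≤ y - y ^ 3 / 6 + y ^ 5 / 100 := by
    have h := sin_bound (x := y) (by rwa [abs_of_nonneg hy0])
    rw [abs_of_nonneg hy0] at h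
    linarith [(abs_le.mp h).2]
  rw [le_arcsin_iff_sin_le ⟨by linarith [pi_gt_three], by linarith [pi_gt_three]⟩
    ⟨by linarith, by linarith⟩]
  linarith

lemma one_sub_half_sub_le_sqrt_one_sub {u : ℝ} (hu0 : 0 ≤ u) (hu1 : u ≤ 1 / 2) :
    1 - u / 2 - u ^ 2 / 8 - u ^ 3 / 8 ≤ √(1 - u) := by
  apply le_sqrt_of_sq_le
  nlinarith [pow_nonneg hu0 2, pow_nonneg hu0 3, pow_nonneg hu0 4, pow_nonneg hu0 5,
    pow_nonneg hu0 6]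

end Real

lemma bsp_time_eq {s : ℝ} (hs : s + 1 ≠ 0) :
    1 + 2 * √(1 - 1 / (s + 1) ^ 2) + (2 * arccos (-1 / (s + 1)) - s + 1) / (s + 1) =
      2 * (√(1 - (s + 1)⁻¹ ^ 2) + (s + 1)⁻¹ * (1 + π / 2 + arcsin (s + 1)⁻¹)) := by
  rw [neg_div, one_div, arccos_neg, arccos_eq_pi_div_two_sub_arcsin, inv_pow]
  field_simp
  ring

lemma halfChord_le_bsp_in_inv {c : ℝ} (hc1 : 1 / 3 ≤ c) (hc2 : c ≤ 50 / 143) :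
    (1 + 2 * π) * c ≤ 2 * (1 - c) * (√(1 - c ^ 2) + c * (1 + π / 2 + arcsin c)) := by
  have hc0 : 0 ≤ c := by linarith
  have h1c : 0 ≤ 1 - c := by linarith
  have hsqrt := one_sub_half_sub_le_sqrt_one_sub (sq_nonneg c) (by nlinarith)
  have harcsin := add_cube_div_eight_le_arcsin hc0 (by linarith)
  have hpoly : 3.1416 * c * (1 + c) + c ≤ 2 * (1 - c) *
      (1 - c ^ 2 / 2 - (c ^ 2) ^ 2 / 8 - (c ^ 2) ^ 3 / 8 + c + c * (c + c ^ 3 / 8)) := by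
    nlinarith [mul_nonneg (sub_nonneg.2 hc1) (sub_nonneg.2 hc2),
      pow_nonneg (sub_nonneg.2 hc2) 2, pow_nonneg (sub_nonneg.2 hc2) 3]
  linarith [mul_le_mul_of_nonneg_left hsqrt h1c,
    mul_le_mul_of_nonneg_left harcsin (mul_nonneg hc0 h1c),
    mul_le_mul_of_nonneg_left pi_lt_d4.le (mul_nonneg hc0 (by linarith : (0 : ℝ) ≤ 1 + c))]

/-- For `1.86 ≤ s ≤ 2`, the generalized Half-Chord worst-case time `(1 + 2π)/s` is at most
the BSP worst-case time `1 + 2·√(1 − 1/(s+1)²) + (2·arccos(−1/(s+1)) − s + 1)/(s + 1)`. -/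
theorem halfChord_beats_bsp (s : ℝ) (hs1 : 1.86 ≤ s) (hs2 : s ≤ 2) :
    (1 + 2 * Real.pi) / s ≤
      1 + 2 * Real.sqrt (1 - 1 / (s + 1) ^ 2) +
        (2 * Real.arccos (-1 / (s + 1)) - s + 1) / (s + 1) := by
  have hs0 : 0 < s := by linarith
  rw [bsp_time_eq (by linarith), div_le_iff₀ hs0]
  set c := (s + 1)⁻¹
  have hc0 : 0 < c := by positivity
  have hcs : c * (s + 1) = 1 := inv_mul_cancel₀ (by linarith)
  have hc1 : 1 / 3 ≤ c := by nlinarith [mul_nonneg hc0.le (sub_nonneg.2 hs2)]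
  have hc2 : c ≤ 50 / 143 := by nlinarith [mul_nonneg hc0.le (sub_nonneg.2 hs1)]
  refine le_of_mul_le_mul_right ?_ hc0
  calc (1 + 2 * π) * c ≤ 2 * (1 - c) * (√(1 - c ^ 2) + c * (1 + π / 2 + arcsin c)) :=
        halfChord_le_bsp_in_inv hc1 hc2
    _ = _ := by linear_combination (-2 * (√(1 - c ^ 2) + c * (1 + π / 2 + arcsin c))) * hcs
end
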